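/- Suppose u ∈ L^p(Ω × (0,T)) for some open set Ω ⊂ ℝⁿ, p ∈ [1,∞), and T > 0, and suppose u(x,t) = ∫_{ℝⁿ} Φ(x−y, t) dμ(y) for some finite positive Borel measure μ on ℝⁿ. Then for every compact subset K of Ω, max_{x∈K} u(x,t) = o(t^{−(n+2)/(2p)}) as t → 0⁺. -/

import Mathlib

open Real MeasureTheory Set Metric

noncomputable def heatKernel (n : ℕ) (x : EuclideanSpace ℝ (Fin n)) (t : ℝ) : ℝ :=
  if 0 < t then (4 * Real.pi * t) ^ (-(n : ℝ) / 2) * Real.exp (-‖x‖ ^ 2 / (4 * t)) else 0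

/-! Parabolic Harnack inequality for the Gaussian kernel: `u(x,t)` is dominated, up to a constant
depending only on `n`, by `u` at every point of the cylinder `B(x,√t) × (2t,3t)`, whose volume is
of order `t^{(n+2)/2}`. Hence `u(x,t)^p t^{(n+2)/2}` is bounded by the `L^p`-mass of `u` on that
cylinder. For `x ∈ K` and small `t` these cylinders lie in a thin slab `K_r × (0,d)` inside
`Ω × (0,T)`, whose mass tends to `0` with `d` by absolute continuity of the integral. -/

lemma exists_setIntegral_prod_Ioo_lt {α : Type*} [MeasurableSpace α] {ν : Measure (α × ℝ)}
    {A : Set α} (hA : MeasurableSet A) {f : α × ℝ → ℝ} {T : ℝ} (hT : 0 < T)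
    (hf : IntegrableOn f (A ×ˢ Ioo 0 T) ν) {η : ℝ} (hη : 0 < η) :
    ∃ d ∈ Ioc 0 T, ∫ z in A ×ˢ Ioo 0 d, f z ∂ν < η := by
  have hanti : Antitone fun m : ℕ => A ×ˢ Ioo (0 : ℝ) (T / (m + 1)) := fun i j hij =>
    prod_mono_right (Ioo_subset_Ioo_right
      (div_le_div_of_nonneg_left hT.le (by positivity) (by exact_mod_cast Nat.succ_le_succ hij)))
  have hempty : ⋂ m : ℕ, A ×ˢ Ioo (0 : ℝ) (T / (m + 1)) = ∅ := by
    refine eq_empty_of_forall_notMem fun z hz => ?_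
    have hz₂ : 0 < z.2 := (mem_iInter.1 hz 0).2.1
    obtain ⟨m, hm⟩ := exists_nat_one_div_lt (div_pos hz₂ hT)
    have := (mem_iInter.1 hz m).2.2
    rw [lt_div_iff₀ hT, div_mul_eq_mul_div, one_mul] at hm
    linarith
  have hlim := tendsto_setIntegral_of_antitone (μ := ν) (f := f)
    (fun m => hA.prod measurableSet_Ioo) hanti ⟨0, by simpa using hf⟩
  rw [hempty, setIntegral_empty] at hlim
  obtain ⟨m, hm⟩ := (hlim.eventually (gt_mem_nhds hη)).exists
  exact ⟨T / (m + 1), ⟨by positivity, div_le_self hT.le (by linarith [m.cast_nonneg (α := ℝ)])⟩, hm⟩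

lemma le_mul_rpow_neg_div_of_rpow_mul_rpow_le {a t p q ε : ℝ} (ha : 0 ≤ a) (ht : 0 < t)
    (hp : 0 < p) (hε : 0 ≤ ε) (h : a ^ p * t ^ q ≤ ε ^ p) :
    a ≤ ε * t ^ (-q / p) := by
  rw [← rpow_le_rpow_iff ha (by positivity) hp, mul_rpow hε (by positivity),
    ← rpow_mul ht.le, div_mul_cancel₀ _ hp.ne', rpow_neg ht.le, ← div_eq_mul_inv,
    le_div_iff₀ (by positivity)]
  exact h

section HeatKernel

variable {n : ℕ}

lemma heatKernel_nonneg (x : EuclideanSpace ℝ (Fin n)) (t : ℝ) : 0 ≤ heatKernel n x t := by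
  unfold heatKernel
  split_ifs <;> positivity

lemma heatKernel_le {t : ℝ} (ht : 0 < t) (x : EuclideanSpace ℝ (Fin n)) :
    heatKernel n x t ≤ (4 * π * t) ^ (-(n : ℝ) / 2) := by
  rw [heatKernel, if_pos ht]
  refine mul_le_of_le_one_right (by positivity) (exp_le_one_iff.2 ?_)
  rw [neg_div, neg_nonpos]
  positivity

lemma continuous_heatKernel {t : ℝ} (ht : 0 < t) :
    Continuous fun x : EuclideanSpace ℝ (Fin n) => heatKernel n x t := by
  simp only [heatKernel, if_pos ht]
  fun_prop

lemma integrable_heatKernel_sub (μ : Measure (EuclideanSpace ℝ (Fin n))) [IsFiniteMeasure μ]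
    (x : EuclideanSpace ℝ (Fin n)) {t : ℝ} (ht : 0 < t) :
    Integrable (fun y => heatKernel n (x - y) t) μ := by
  refine Integrable.of_bound
    ((continuous_heatKernel ht).comp (continuous_sub_left x)).aestronglyMeasurable
    ((4 * π * t) ^ (-(n : ℝ) / 2)) (ae_of_all _ fun y => ?_)
  rw [norm_of_nonneg (heatKernel_nonneg _ _)]
  exact heatKernel_le ht _

noncomputable def harnackConst (n : ℕ) : ℝ := 3 ^ (-(n : ℝ) / 2) * exp (-(1 / 4))

lemma harnackConst_pos : 0 < harnackConst n := by
  unfold harnackConst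
  positivity

/-- Since `s ≥ 2t`, shifting the centre by at most `√t` costs at most `e^{-1/4}` in the Gaussian
factor; since `s ≤ 3t`, the prefactor drops by at most `3^{-n/2}`. -/
lemma harnackConst_mul_heatKernel_le {t s : ℝ} (ht : 0 < t) (hts : 2 * t ≤ s) (hst : s ≤ 3 * t)
    {x z : EuclideanSpace ℝ (Fin n)} (hz : dist z x ≤ √t) (y : EuclideanSpace ℝ (Fin n)) :
    harnackConst n * heatKernel n (x - y) t ≤ heatKernel n (z - y) s := by
  have hs : 0 < s := by linarith
  rw [heatKernel, heatKernel, if_pos ht, if_pos hs]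
  have hprefactor : (3 : ℝ) ^ (-(n : ℝ) / 2) * (4 * π * t) ^ (-(n : ℝ) / 2) ≤
      (4 * π * s) ^ (-(n : ℝ) / 2) := by
    rw [← mul_rpow (by norm_num) (by positivity)]
    refine rpow_le_rpow_of_nonpos (by positivity) (by nlinarith [pi_pos]) ?_
    have : (0 : ℝ) ≤ n := n.cast_nonneg
    linarith
  have hzx : ‖z - x‖ ^ 2 ≤ t := by
    rw [← dist_eq_norm]
    exact (le_sqrt dist_nonneg ht.le).1 hz
  have hzy : ‖z - y‖ ^ 2 ≤ 2 * ‖x - y‖ ^ 2 + 2 * t := by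
    have := norm_sub_le_norm_sub_add_norm_sub z x y
    nlinarith [norm_nonneg (z - y), sq_nonneg (‖z - x‖ - ‖x - y‖)]
  have hexponent : -(1 / 4) + -‖x - y‖ ^ 2 / (4 * t) ≤ -‖z - y‖ ^ 2 / (4 * s) := by
    have : ‖z - y‖ ^ 2 / (4 * s) ≤ (2 * ‖x - y‖ ^ 2 + 2 * t) / (8 * t) :=
      div_le_div₀ (by positivity) hzy (by positivity) (by linarith)
    have hsplit : (2 * ‖x - y‖ ^ 2 + 2 * t) / (8 * t) = ‖x - y‖ ^ 2 / (4 * t) + 1 / 4 := by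
      field_simp
      ring
    rw [neg_div, neg_div]
    linarith
  calc harnackConst n * ((4 * π * t) ^ (-(n : ℝ) / 2) * exp (-‖x - y‖ ^ 2 / (4 * t)))
      = (3 ^ (-(n : ℝ) / 2) * (4 * π * t) ^ (-(n : ℝ) / 2)) *
          exp (-(1 / 4) + -‖x - y‖ ^ 2 / (4 * t)) := by
        rw [harnackConst, exp_add]
        ring
    _ ≤ (4 * π * s) ^ (-(n : ℝ) / 2) * exp (-‖z - y‖ ^ 2 / (4 * s)) :=
        mul_le_mul hprefactor (exp_le_exp.2 hexponent) (by positivity) (by positivity)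

end HeatKernel

section HeatSolution

variable {n : ℕ} {μ : Measure (EuclideanSpace ℝ (Fin n))}
  {u : EuclideanSpace ℝ (Fin n) → ℝ → ℝ}

lemma heat_nonneg (hu : ∀ x t, 0 < t → u x t = ∫ y, heatKernel n (x - y) t ∂μ)
    {x : EuclideanSpace ℝ (Fin n)} {t : ℝ} (ht : 0 < t) : 0 ≤ u x t := by
  rw [hu x t ht]
  exact integral_nonneg fun y => heatKernel_nonneg _ _

lemma harnackConst_mul_heat_le [IsFiniteMeasure μ]
    (hu : ∀ x t, 0 < t → u x t = ∫ y, heatKernel n (x - y) t ∂μ)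
    {t s : ℝ} (ht : 0 < t) (hts : 2 * t ≤ s) (hst : s ≤ 3 * t)
    {x z : EuclideanSpace ℝ (Fin n)} (hz : dist z x ≤ √t) :
    harnackConst n * u x t ≤ u z s := by
  have hs : 0 < s := by linarith
  rw [hu x t ht, hu z s hs, ← integral_const_mul]
  exact integral_mono ((integrable_heatKernel_sub μ x ht).const_mul _)
    (integrable_heatKernel_sub μ z hs) (harnackConst_mul_heatKernel_le ht hts hst hz)

def harnackCylinder (x : EuclideanSpace ℝ (Fin n)) (t : ℝ) :
    Set (EuclideanSpace ℝ (Fin n) × ℝ) :=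
  ball x √t ×ˢ Ioo (2 * t) (3 * t)

lemma volume_harnackCylinder (x : EuclideanSpace ℝ (Fin n)) {t : ℝ} (ht : 0 < t) :
    (volume (harnackCylinder x t)).toReal =
      (volume (ball (0 : EuclideanSpace ℝ (Fin n)) 1)).toReal * t ^ (((n : ℝ) + 2) / 2) := by
  have hpow : √t ^ n * t = t ^ (((n : ℝ) + 2) / 2) := by
    rw [sqrt_eq_rpow, ← rpow_natCast, ← rpow_mul ht.le, ← rpow_add_one ht.ne']
    ring_nf
  rw [harnackCylinder, Measure.volume_eq_prod, Measure.prod_prod,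
    Measure.addHaar_ball_of_pos _ _ (sqrt_pos.2 ht), finrank_euclideanSpace_fin, volume_Ioo,
    ENNReal.toReal_mul, ENNReal.toReal_mul, ENNReal.toReal_ofReal (by positivity),
    ENNReal.toReal_ofReal (by linarith), ← hpow]
  ring

lemma harnackCylinder_subset {K : Set (EuclideanSpace ℝ (Fin n))} {x : EuclideanSpace ℝ (Fin n)}
    (hx : x ∈ K) {r t d : ℝ} (htr : t ≤ r ^ 2) (htd : 3 * t ≤ d) (hr : 0 ≤ r) :
    harnackCylinder x t ⊆ cthickening r K ×ˢ Ioo 0 d := by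
  rintro ⟨z, s⟩ ⟨hz, hs₁, hs₂⟩
  refine ⟨mem_cthickening_of_dist_le z x r K hx ?_, by linarith, by linarith⟩
  exact (mem_ball.1 hz).le.trans ((sqrt_le_left hr).2 htr)

lemma rpow_mul_volume_le_setIntegral_harnackCylinder [IsFiniteMeasure μ]
    (hu : ∀ x t, 0 < t → u x t = ∫ y, heatKernel n (x - y) t ∂μ)
    {p : ℝ} (hp : 0 ≤ p) (x : EuclideanSpace ℝ (Fin n)) {t : ℝ} (ht : 0 < t)
    (hint : IntegrableOn (fun z => u z.1 z.2 ^ p) (harnackCylinder x t)) :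
    (harnackConst n * u x t) ^ p * (volume (harnackCylinder x t)).toReal ≤
      ∫ z in harnackCylinder x t, u z.1 z.2 ^ p := by
  have hfinite : volume (harnackCylinder x t) ≠ ⊤ := by
    exact (isBounded_ball.prod (isBounded_Ioo _ _)).measure_lt_top.ne
  have hpointwise : ∀ z ∈ harnackCylinder x t, (harnackConst n * u x t) ^ p ≤ u z.1 z.2 ^ p := by
    rintro ⟨z, s⟩ ⟨hz, hs₁, hs₂⟩
    exact rpow_le_rpow (mul_nonneg harnackConst_pos.le (heat_nonneg hu ht))
      (harnackConst_mul_heat_le hu ht hs₁.le hs₂.le (mem_ball.1 hz).le) hp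
  have := setIntegral_mono_on (integrableOn_const hfinite) hint
    (measurableSet_ball.prod measurableSet_Ioo) hpointwise
  rwa [setIntegral_const, smul_eq_mul, Measure.real, mul_comm] at this

end HeatSolution

theorem initial_trace_little_o_general (n : ℕ) (Ω : Set (EuclideanSpace ℝ (Fin n)))
    (hΩ : IsOpen Ω) (p T : ℝ) (hp : 1 ≤ p) (hT : 0 < T)
    (μ : Measure (EuclideanSpace ℝ (Fin n))) [IsFiniteMeasure μ]
    (u : EuclideanSpace ℝ (Fin n) → ℝ → ℝ)
    (hu : ∀ (x : EuclideanSpace ℝ (Fin n)) (t : ℝ), 0 < t →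
      u x t = ∫ y, heatKernel n (x - y) t ∂μ)
    (hLp : IntegrableOn (fun z : EuclideanSpace ℝ (Fin n) × ℝ => u z.1 z.2 ^ p)
      (Ω ×ˢ Set.Ioo 0 T))
    (K : Set (EuclideanSpace ℝ (Fin n))) (hK : IsCompact K) (hKΩ : K ⊆ Ω) :
    ∀ ε > 0, ∃ δ > 0, ∀ t ∈ Set.Ioo (0 : ℝ) δ, ∀ x ∈ K,
      u x t ≤ ε * t ^ (-((n : ℝ) + 2) / (2 * p)) := by
  intro ε hε
  have hp₀ : 0 < p := by linarith
  obtain ⟨r, hr, hrΩ⟩ := hK.exists_cthickening_subset_open hΩ hKΩ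
  set C := harnackConst n ^ p * (volume (ball (0 : EuclideanSpace ℝ (Fin n)) 1)).toReal
  have hC : 0 < C := mul_pos (rpow_pos_of_pos harnackConst_pos p)
    (ENNReal.toReal_pos (measure_ball_pos _ _ one_pos).ne' measure_ball_lt_top.ne)
  obtain ⟨d, ⟨hd, hdT⟩, hsmall⟩ := exists_setIntegral_prod_Ioo_lt
    isClosed_cthickening.measurableSet hT (hLp.mono_set (prod_mono hrΩ le_rfl))
    (mul_pos hC (rpow_pos_of_pos hε p))
  have hint : IntegrableOn (fun z => u z.1 z.2 ^ p) (cthickening r K ×ˢ Ioo 0 d) :=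
    hLp.mono_set (prod_mono hrΩ (Ioo_subset_Ioo_right hdT))
  have hnonneg : 0 ≤ᵐ[volume.restrict (cthickening r K ×ˢ Ioo 0 d)] fun z => u z.1 z.2 ^ p :=
    (ae_restrict_iff' (isClosed_cthickening.measurableSet.prod measurableSet_Ioo)).2
      (ae_of_all _ fun z hz => rpow_nonneg (heat_nonneg hu hz.2.1) p)
  refine ⟨min (d / 3) (r ^ 2), by positivity, fun t ⟨ht, htδ⟩ x hx => ?_⟩
  have hcyl : harnackCylinder x t ⊆ cthickening r K ×ˢ Ioo 0 d := harnackCylinder_subset hx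
    (htδ.le.trans (min_le_right _ _)) (by linarith [htδ.trans_le (min_le_left _ _)]) hr.le
  have hbound : C * (u x t ^ p * t ^ (((n : ℝ) + 2) / 2)) ≤ C * ε ^ p :=
    calc C * (u x t ^ p * t ^ (((n : ℝ) + 2) / 2))
        = (harnackConst n * u x t) ^ p * (volume (harnackCylinder x t)).toReal := by
          rw [mul_rpow harnackConst_pos.le (heat_nonneg hu ht), volume_harnackCylinder x ht]
          ring
      _ ≤ ∫ z in harnackCylinder x t, u z.1 z.2 ^ p :=
          rpow_mul_volume_le_setIntegral_harnackCylinder hu hp₀.le x ht (hint.mono_set hcyl)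
      _ ≤ ∫ z in cthickening r K ×ˢ Ioo 0 d, u z.1 z.2 ^ p :=
          setIntegral_mono_set hint hnonneg hcyl.eventuallyLE
      _ ≤ C * ε ^ p := hsmall.le
  convert le_mul_rpow_neg_div_of_rpow_mul_rpow_le (heat_nonneg hu ht) ht hp₀ hε.le
    (le_of_mul_le_mul_left hbound hC) using 3
  ring

theorem initial_trace_little_o (n : ℕ) (hn : 1 ≤ n) (Ω : Set (EuclideanSpace ℝ (Fin n)))
    (hΩ : IsOpen Ω) (p T : ℝ) (hp : 1 ≤ p) (hT : 0 < T)
    (μ : Measure (EuclideanSpace ℝ (Fin n))) [IsFiniteMeasure μ]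
    (u : EuclideanSpace ℝ (Fin n) → ℝ → ℝ)
    (hu : ∀ (x : EuclideanSpace ℝ (Fin n)) (t : ℝ), 0 < t →
      u x t = ∫ y, heatKernel n (x - y) t ∂μ)
    (hLp : IntegrableOn (fun z : EuclideanSpace ℝ (Fin n) × ℝ => u z.1 z.2 ^ p)
      (Ω ×ˢ Set.Ioo 0 T))
    (K : Set (EuclideanSpace ℝ (Fin n))) (hK : IsCompact K) (hKΩ : K ⊆ Ω) :
    ∀ ε > 0, ∃ δ > 0, ∀ t ∈ Set.Ioo (0 : ℝ) δ, ∀ x ∈ K,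
      u x t ≤ ε * t ^ (-((n : ℝ) + 2) / (2 * p)) :=
  initial_trace_little_o_general n Ω hΩ p T hp hT μ u hu hLp K hK hKΩ
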